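/- Let x, y be a heavy pair such that y lies on π(s, u_{H_x}) strictly above r(x) (i.e., y is a proper ancestor of r(x)) and the tree edge (y, y_h) lies on π_x(s, H_x). Define Ĉ(x,y) as the union of all components C ∈ C_x such that the tree edge (y,y_h) lies on π_x(s,C). Then G \ {x,y} is connected if and only if there is an edge of G from a vertex of Ĉ(x,y) ∪ H_y to a vertex of V \ (Ĉ(x,y) ∪ H_y ∪ {x,y}). -/

import Mathlib

/-- A rooted spanning tree of the graph `G`, given by a root and a parent function:
the root is a fixed point of `parent`, every vertex reaches the root by iterating
`parent`, and every (parent, child) pair is an edge of `G`. -/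
structure RSTree {V : Type*} (G : SimpleGraph V) where
  root : V
  parent : V → V
  parent_root : parent root = root
  reaches : ∀ v : V, ∃ n : ℕ, parent^[n] v = root
  adj : ∀ v : V, v ≠ root → G.Adj (parent v) v

namespace RSTree

variable {V : Type*} {G : SimpleGraph V}

/-- `u` is an ancestor of `v` in `T`, i.e. `u` lies on the tree path `π(root, v)`;
includes `u = v`. -/
def Anc (T : RSTree G) (u v : V) : Prop := ∃ n : ℕ, T.parent^[n] v = u

/-- The vertex set `V(T_x)` of the subtree of `T` rooted at `x`. -/
def sub (T : RSTree G) (x : V) : Set V := {v | T.Anc x v}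

/-- `c` is a child of `v` in `T`. -/
def IsChild (T : RSTree G) (c v : V) : Prop := T.parent c = v ∧ c ≠ v

/-- `V_x = V(T_x) \ {x}`. -/
def Vx (T : RSTree G) (x : V) : Set V := {v | T.Anc x v ∧ v ≠ x}

end RSTree

/-- `v` and `w` are connected by a walk of `G` all of whose vertices lie in `S`
(i.e. they lie in the same connected component of the induced subgraph `G[S]`). -/
def ReachableWithin {V : Type*} (G : SimpleGraph V) (S : Set V) (v w : V) : Prop :=
  ∃ p : G.Walk v w, ∀ u ∈ p.support, u ∈ S

/-- `C` is (the vertex set of) a connected component of the induced subgraph `G[S]`. -/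
def IsCompOf {V : Type*} (G : SimpleGraph V) (S : Set V) (C : Set V) : Prop :=
  ∃ v ∈ S, C = {w | ReachableWithin G S v w}

/-- The connected component of `v` in the induced subgraph `G[S]` (as a vertex set). -/
def CompOfVert {V : Type*} (G : SimpleGraph V) (S : Set V) (v : V) : Set V :=
  {w | ReachableWithin G S v w}

/-- The vertex set of the path `π_x(s,C) = π(s, u_C) ∘ (u_C, v_C)` associated to a
component `C` (given the choice functions `uc, vc` of the edge `(u_C, v_C)`): it
consists of all ancestors of `u_C` together with `v_C`. -/
def CompPath {V : Type*} {G : SimpleGraph V} (T : RSTree G)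
    (uc vc : Set V → V) (C : Set V) : Set V :=
  {w | T.Anc w (uc C)} ∪ {vc C}

/-- `C ∈ 𝒞_x` is pseudo-`y`-sensitive: the path `π_x(s,C)` contains a tree edge
`(y, y')` from `y` to a child `y'` of `y` such that `x` does not lie on
`π_y(s, C_{y,y'})`. Here `ucx, vcx` are the edge choices for components of `G[V_x]`
and `ucy, vcy` those for components of `G[V_y]`. -/
def PseudoSens {V : Type*} {G : SimpleGraph V} (T : RSTree G)
    (ucx vcx ucy vcy : Set V → V) (x y : V) (C : Set V) : Prop :=
  ∃ y', T.IsChild y' y ∧ T.Anc y' (ucx C) ∧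
    x ∉ CompPath T ucy vcy (CompOfVert G (T.Vx y) y')

/-- `C ∈ 𝒞_x` is fully-`y`-sensitive: `y` lies on `π_x(s,C)` (i.e. `C` is
`y`-sensitive) and `C` is not pseudo-`y`-sensitive. -/
def FullySens {V : Type*} {G : SimpleGraph V} (T : RSTree G)
    (ucx vcx ucy vcy : Set V → V) (x y : V) (C : Set V) : Prop :=
  y ∈ CompPath T ucx vcx C ∧ ¬ PseudoSens T ucx vcx ucy vcy x y C

/-- `hch` is a valid designation of heavy children: for every non-leaf vertex `v`,
`hch v` is a child of `v` whose subtree has the maximum number of vertices among all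
children of `v`. -/
def HchValid {V : Type*} {G : SimpleGraph V} (T : RSTree G) (hch : V → V) : Prop :=
  ∀ v : V, (∃ c, T.IsChild c v) →
    T.IsChild (hch v) v ∧ ∀ c, T.IsChild c v → (T.sub c).ncard ≤ (T.sub (hch v)).ncard

/-- The family `uc, vc` of edge choices is valid: for every `x ≠ s` with `G \ {x}`
connected and every connected component `C` of `G[V_x]`, `(uc x C, vc x C)` is an edge
of `G` with `vc x C ∈ C` and `uc x C ∉ V(T_x)`. -/
def GoodChoice {V : Type*} (G : SimpleGraph V) (T : RSTree G)
    (uc vc : V → Set V → V) : Prop :=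
  ∀ x : V, x ≠ T.root → (G.induce (({x} : Set V)ᶜ)).Connected →
    ∀ C, IsCompOf G (T.Vx x) C →
      G.Adj (uc x C) (vc x C) ∧ vc x C ∈ C ∧ uc x C ∉ T.sub x

/-- `x, y` is a heavy pair: an independent pair, both non-leaves of `T`, both `≠ s`,
with `G \ {x}` and `G \ {y}` connected, such that every fully-`y`-sensitive component
`C ∈ FS(x,y)` has the tree edge `(y, y_h)` on `π_x(s,C)` and every fully-`x`-sensitive
component `C ∈ FS(y,x)` has the tree edge `(x, x_h)` on `π_y(s,C)`. -/
def HeavyPair {V : Type*} {G : SimpleGraph V} (T : RSTree G) (hch : V → V)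
    (uc vc : V → Set V → V) (x y : V) : Prop :=
  x ≠ T.root ∧ y ≠ T.root ∧ ¬ T.Anc x y ∧ ¬ T.Anc y x ∧
  T.IsChild (hch x) x ∧ T.IsChild (hch y) y ∧
  (G.induce (({x} : Set V)ᶜ)).Connected ∧ (G.induce (({y} : Set V)ᶜ)).Connected ∧
  (∀ C, IsCompOf G (T.Vx x) C → FullySens T (uc x) (vc x) (uc y) (vc y) x y C →
    T.Anc (hch y) (uc x C)) ∧
  (∀ C, IsCompOf G (T.Vx y) C → FullySens T (uc y) (vc y) (uc x) (vc x) y x C →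
    T.Anc (hch x) (uc y C))

/-! In `G \ {x,y}` let `D = Ĉ(x,y) ∪ H_y`. Every vertex of `D` reaches `y_h`:
a component in `Ĉ(x,y)` leaves `T_x` through its chosen edge into `T_{y_h}`. Every other
vertex reaches the root. A component of `G[V_x]` or `G[V_y]` outside `D` leaves its subtree
either to a vertex outside both subtrees, or, being pseudo-sensitive, into a component of the
other subtree whose own exit avoids the removed vertex. The remaining case is a component
`C ∈ FS(y,x)` outside `H_y`. Its edge then ends in `H_x`, so `v_C ∈ R(x)`. Hence `v_C` is a
descendant of `r(x)` and so of `y_h`, and this puts `y_h` in `C`. Therefore `G \ {x,y}` is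
connected iff some edge leaves `D`. -/

namespace RSTree

variable {V : Type*} {G : SimpleGraph V} (T : RSTree G) {u v w c p : V}

lemma iterate_parent_root (n : ℕ) : T.parent^[n] T.root = T.root :=
  Function.iterate_fixed T.parent_root n

lemma anc_refl (u : V) : T.Anc u u := ⟨0, rfl⟩

variable {T}

lemma Anc.trans (h₁ : T.Anc u v) (h₂ : T.Anc v w) : T.Anc u w := by
  obtain ⟨n, rfl⟩ := h₁
  obtain ⟨m, rfl⟩ := h₂
  exact ⟨n + m, Function.iterate_add_apply _ _ _ _⟩

lemma eq_root_of_iterate_eq {k : ℕ} (hk : k ≠ 0) (h : T.parent^[k] v = v) : v = T.root := by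
  obtain ⟨n, hn⟩ := T.reaches v
  calc v = T.parent^[k * n] v := (Function.iterate_mul T.parent k n ▸
          Function.iterate_fixed h n).symm
    _ = T.parent^[k * n - n] (T.parent^[n] v) := by
          rw [← Function.iterate_add_apply, Nat.sub_add_cancel (Nat.le_mul_of_pos_left n
            (Nat.pos_of_ne_zero hk))]
    _ = T.root := by rw [hn, T.iterate_parent_root]

lemma anc_antisymm (h₁ : T.Anc u v) (h₂ : T.Anc v u) : u = v := by
  obtain ⟨n, rfl⟩ := h₁
  obtain ⟨m, hm⟩ := h₂
  rcases Nat.eq_zero_or_pos (n + m) with h | h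
  · rw [Nat.eq_zero_of_add_eq_zero_right h, Function.iterate_zero_apply]
  · have hv : v = T.root := eq_root_of_iterate_eq (k := m + n) (by omega) <| by
      rw [Function.iterate_add_apply, hm]
    rw [hv, T.iterate_parent_root]

lemma anc_total (hu : T.Anc u w) (hv : T.Anc v w) : T.Anc u v ∨ T.Anc v u := by
  obtain ⟨n, rfl⟩ := hu
  obtain ⟨m, rfl⟩ := hv
  rcases le_total n m with h | h
  · exact Or.inr ⟨m - n, by rw [← Function.iterate_add_apply, Nat.sub_add_cancel h]⟩
  · exact Or.inl ⟨n - m, by rw [← Function.iterate_add_apply, Nat.sub_add_cancel h]⟩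

lemma not_anc_of_not_anc_of_anc {x y : V} (hxy : ¬ T.Anc x y) (hyx : ¬ T.Anc y x)
    (hyw : T.Anc y w) : ¬ T.Anc x w :=
  fun hxw => (anc_total hxw hyw).elim hxy hyx

lemma Anc.anc_parent (h : T.Anc u v) (hne : u ≠ v) : T.Anc u (T.parent v) := by
  obtain ⟨_ | n, hn⟩ := h
  · exact absurd hn.symm hne
  · exact ⟨n, hn⟩

lemma IsChild.anc (h : T.IsChild c p) : T.Anc p c := ⟨1, h.1⟩

lemma IsChild.anc_of_anc_of_anc {r : V} (hc : T.IsChild c p) (hpr : T.Anc p r) (hne : p ≠ r)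
    (hcu : T.Anc c u) (hru : T.Anc r u) : T.Anc c r := by
  rcases anc_total hcu hru with hcr | hrc
  · exact hcr
  · by_cases hrc' : r = c
    · exact hrc' ▸ T.anc_refl r
    · exact absurd (anc_antisymm hpr (hc.1 ▸ hrc.anc_parent hrc')) hne

lemma IsChild.mem_Vx (hc : T.IsChild c p) (hw : T.Anc c w) : w ∈ T.Vx p :=
  ⟨hc.anc.trans hw, fun hwp => hc.2 (anc_antisymm (hwp ▸ hw) hc.anc)⟩

lemma Vx_subset_compl_pair {x y : V} (h : ¬ T.Anc x y) : T.Vx x ⊆ ({x, y}ᶜ : Set V) := by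
  rintro w ⟨hxw, hwx⟩ (rfl | rfl)
  exacts [hwx rfl, h hxw]

end RSTree

open RSTree

namespace ReachableWithin

variable {V : Type*} {G : SimpleGraph V} {S : Set V} {u v w : V}

lemma refl (h : v ∈ S) : ReachableWithin G S v v := ⟨.nil, by simpa⟩

lemma mem_left (h : ReachableWithin G S v w) : v ∈ S :=
  let ⟨p, hp⟩ := h
  hp v p.start_mem_support

lemma symm (h : ReachableWithin G S v w) : ReachableWithin G S w v := by
  obtain ⟨p, hp⟩ := h
  exact ⟨p.reverse, fun u hu => hp u (by rwa [p.support_reverse, List.mem_reverse] at hu)⟩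

lemma trans (h₁ : ReachableWithin G S u v) (h₂ : ReachableWithin G S v w) :
    ReachableWithin G S u w := by
  obtain ⟨p, hp⟩ := h₁
  obtain ⟨q, hq⟩ := h₂
  exact ⟨p.append q, fun z hz => (p.mem_support_append_iff q).mp hz |>.elim (hp z) (hq z)⟩

lemma mono {S' : Set V} (hS : S ⊆ S') (h : ReachableWithin G S v w) :
    ReachableWithin G S' v w :=
  let ⟨p, hp⟩ := h
  ⟨p, fun u hu => hS (hp u hu)⟩

lemma of_adj (h : G.Adj v w) (hv : v ∈ S) (hw : w ∈ S) : ReachableWithin G S v w :=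
  ⟨h.toWalk, by simp [hv, hw]⟩

lemma of_anc (T : RSTree G) (h : T.Anc u v) (hS : ∀ w, T.Anc u w → T.Anc w v → w ∈ S) :
    ReachableWithin G S v u := by
  obtain ⟨n, hn⟩ := h
  induction n generalizing v with
  | zero =>
    obtain rfl : v = u := hn
    exact refl (hS v (T.anc_refl v) (T.anc_refl v))
  | succ n ih =>
    by_cases hv : v = T.root
    · subst hv
      obtain rfl : T.root = u := (T.iterate_parent_root _).symm.trans hn
      exact refl (hS T.root (T.anc_refl _) (T.anc_refl _))
    · have hpv : T.Anc (T.parent v) v := ⟨1, rfl⟩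
      exact (of_adj (T.adj v hv).symm (hS v ⟨n + 1, hn⟩ (T.anc_refl v))
        (hS _ ⟨n, hn⟩ hpv)).trans (ih (fun w huw hwv => hS w huw (hwv.trans hpv)) hn)

lemma iff_reachable_induce {a b : S} :
    ReachableWithin G S a b ↔ (G.induce S).Reachable a b := by
  refine ⟨fun ⟨p, hp⟩ => ⟨p.induce S hp⟩, ?_⟩
  rintro ⟨q⟩
  induction q with
  | nil => exact refl (Subtype.prop _)
  | @cons v w _ h _ ih => exact (of_adj (G := G) h v.2 w.2).trans ih

end ReachableWithin

section Components

variable {V : Type*} {G : SimpleGraph V} {S C : Set V} {a b v : V}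

lemma mem_compOfVert_self (h : v ∈ S) : v ∈ CompOfVert G S v := .refl h

lemma compOfVert_subset : CompOfVert G S v ⊆ S := fun _ h => h.symm.mem_left

lemma isCompOf_compOfVert (h : v ∈ S) : IsCompOf G S (CompOfVert G S v) := ⟨v, h, rfl⟩

lemma IsCompOf.subset (h : IsCompOf G S C) : C ⊆ S := by
  obtain ⟨_, _, rfl⟩ := h
  exact compOfVert_subset

lemma IsCompOf.reachableWithin (h : IsCompOf G S C) (ha : a ∈ C) (hb : b ∈ C) :
    ReachableWithin G S a b := by
  obtain ⟨_, _, rfl⟩ := h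
  exact ha.symm.trans hb

lemma IsCompOf.mem_of_reachableWithin (h : IsCompOf G S C) (ha : a ∈ C)
    (hab : ReachableWithin G S a b) : b ∈ C := by
  obtain ⟨_, _, rfl⟩ := h
  exact ha.trans hab

lemma reachableWithin_Vx_of_isChild {T : RSTree G} {c p w : V} (hc : T.IsChild c p)
    (hw : T.Anc c w) : ReachableWithin G (T.Vx p) w c :=
  .of_anc T hw fun _ hz _ => hc.mem_Vx hz

end Components

theorem induce_compl_connected_iff_exists_adj {V : Type*} {G : SimpleGraph V} {U D : Set V}
    {d r : V} (hd : d ∈ D) (hr : r ∉ D ∪ U) (hDd : ∀ v ∈ D, ReachableWithin G Uᶜ v d)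
    (hSr : ∀ v, v ∉ D ∪ U → ReachableWithin G Uᶜ v r) :
    (G.induce Uᶜ).Connected ↔ ∃ a b, G.Adj a b ∧ a ∈ D ∧ b ∉ D ∪ U := by
  have hdS : d ∈ Uᶜ := (hDd d hd).mem_left
  have hrS : r ∈ Uᶜ := (hSr r hr).mem_left
  constructor
  · intro hconn
    obtain ⟨p, hp⟩ := ReachableWithin.iff_reachable_induce.mpr
      (hconn.preconnected ⟨d, hdS⟩ ⟨r, hrS⟩)
    obtain ⟨e, he, hea, heb⟩ := p.exists_boundary_dart D hd (fun h => hr (.inl h))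
    refine ⟨e.fst, e.snd, e.adj, hea, ?_⟩
    rintro (h | h)
    exacts [heb h, hp _ (p.dart_snd_mem_support_of_mem_darts he) h]
  · rintro ⟨a, b, hab, ha, hb⟩
    have hdr : ReachableWithin G Uᶜ d r := (hDd a ha).symm.trans <|
      (ReachableWithin.of_adj hab (hDd a ha).mem_left (hSr b hb).mem_left).trans (hSr b hb)
    have hall : ∀ v ∈ Uᶜ, ReachableWithin G Uᶜ v r := by
      intro v hv
      by_cases hvD : v ∈ D
      · exact (hDd v hvD).trans hdr
      · exact hSr v fun h => h.elim hvD hv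
    refine SimpleGraph.connected_iff_exists_forall_reachable _ |>.mpr ⟨⟨r, hrS⟩, ?_⟩
    rintro ⟨v, hv⟩
    exact ReachableWithin.iff_reachable_induce.mp (hall v hv).symm

def IsExitEdge {V : Type*} {G : SimpleGraph V} (T : RSTree G) (x : V) (C : Set V)
    (u w : V) : Prop :=
  G.Adj u w ∧ w ∈ C ∧ u ∉ T.sub x

section IndependentPair

variable {V : Type*} {G : SimpleGraph V} {T : RSTree G} {x y u w v : V} {C : Set V}

lemma reachableWithin_root_of_not_anc (hx : ¬ T.Anc x v) (hy : ¬ T.Anc y v) :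
    ReachableWithin G ({x, y}ᶜ) v T.root :=
  .of_anc T (T.reaches v) fun _ _ hwv => by
    rintro (rfl | rfl)
    exacts [hx hwv, hy hwv]

lemma IsExitEdge.reachableWithin {S : Set V} (hC : IsCompOf G (T.Vx x) C)
    (he : IsExitEdge T x C u w) (hS : T.Vx x ⊆ S) (hu : u ∈ S) (hv : v ∈ C) :
    ReachableWithin G S v u :=
  ((hC.reachableWithin hv he.2.1).mono hS).trans
    (.of_adj he.1.symm (hS (hC.subset he.2.1)) hu)

lemma IsExitEdge.reachableWithin_root (hxy : ¬ T.Anc x y) (hC : IsCompOf G (T.Vx x) C)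
    (he : IsExitEdge T x C u w) (hu : ¬ T.Anc y u) (hv : v ∈ C) :
    ReachableWithin G ({x, y}ᶜ) v T.root := by
  have hux : ¬ T.Anc x u := he.2.2
  refine (he.reachableWithin hC (Vx_subset_compl_pair hxy) ?_ hv).trans
    (reachableWithin_root_of_not_anc hux hu)
  rintro (rfl | rfl)
  exacts [hux (T.anc_refl u), hu (T.anc_refl u)]

lemma PseudoSens.reachableWithin_root {ucx vcx ucy vcy : Set V → V} (hxy : ¬ T.Anc x y)
    (hyx : ¬ T.Anc y x) (hC : IsCompOf G (T.Vx x) C)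
    (he : IsExitEdge T x C (ucx C) (vcx C))
    (hey : ∀ C', IsCompOf G (T.Vx y) C' → IsExitEdge T y C' (ucy C') (vcy C'))
    (hps : PseudoSens T ucx vcx ucy vcy x y C) (hv : v ∈ C) :
    ReachableWithin G ({x, y}ᶜ) v T.root := by
  obtain ⟨y₁, hy₁, hanc, hx⟩ := hps
  have hy₁V : y₁ ∈ T.Vx y := hy₁.mem_Vx (T.anc_refl y₁)
  have hC₁ := isCompOf_compOfVert (G := G) hy₁V
  have huC₁ : ucx C ∈ CompOfVert G (T.Vx y) y₁ := (reachableWithin_Vx_of_isChild hy₁ hanc).symm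
  have hroot := (hey _ hC₁).reachableWithin_root hyx hC₁ (fun h => hx (.inl h)) huC₁
  rw [Set.pair_comm] at hroot
  exact (he.reachableWithin hC (Vx_subset_compl_pair hxy)
    (Set.pair_comm y x ▸ Vx_subset_compl_pair hyx (hC₁.subset huC₁)) hv).trans hroot

lemma IsExitEdge.mem_of_anc_heavy {xh yh r : V} (hxy : ¬ T.Anc x y) (hyx : ¬ T.Anc y x)
    (hxh : T.IsChild xh x) (hyh : T.IsChild yh y)
    (hr : ∀ a : V, (a ∉ T.sub x ∧ ∃ b ∈ CompOfVert G (T.Vx x) xh, G.Adj a b) → T.Anc r a)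
    (hyr : T.Anc yh r) (hC : IsCompOf G (T.Vx y) C) (he : IsExitEdge T y C u w)
    (hu : T.Anc xh u) : yh ∈ C := by
  have hwV : w ∈ T.Vx y := hC.subset he.2.1
  have hrw : T.Anc r w := hr w ⟨not_anc_of_not_anc_of_anc hxy hyx hwV.1, u,
    (reachableWithin_Vx_of_isChild hxh hu).symm, he.1.symm⟩
  exact hC.mem_of_reachableWithin he.2.1 (reachableWithin_Vx_of_isChild hyh (hyr.trans hrw))

variable {yh : V} {ucx vcx ucy vcy : Set V → V}

lemma reachableWithin_heavy_of_mem (hxy : ¬ T.Anc x y) (hyx : ¬ T.Anc y x)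
    (hyh : T.IsChild yh y)
    (hex : ∀ C, IsCompOf G (T.Vx x) C → IsExitEdge T x C (ucx C) (vcx C))
    (hv : v ∈ {w | ∃ C, IsCompOf G (T.Vx x) C ∧ T.Anc yh (ucx C) ∧ w ∈ C}
      ∪ CompOfVert G (T.Vx y) yh) :
    ReachableWithin G ({x, y}ᶜ) v yh := by
  have hVy : T.Vx y ⊆ ({x, y}ᶜ : Set V) := Set.pair_comm y x ▸ Vx_subset_compl_pair hyx
  rcases hv with ⟨C, hC, hanc, hvC⟩ | hv
  · exact ((hex C hC).reachableWithin hC (Vx_subset_compl_pair hxy) (hVy (hyh.mem_Vx hanc))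
      hvC).trans ((reachableWithin_Vx_of_isChild hyh hanc).mono hVy)
  · exact hv.symm.mono hVy

lemma reachableWithin_root_of_mem_Vx (hxy : ¬ T.Anc x y) (hyx : ¬ T.Anc y x)
    (hex : ∀ C, IsCompOf G (T.Vx x) C → IsExitEdge T x C (ucx C) (vcx C))
    (hey : ∀ C, IsCompOf G (T.Vx y) C → IsExitEdge T y C (ucy C) (vcy C))
    (hFS : ∀ C, IsCompOf G (T.Vx x) C → FullySens T ucx vcx ucy vcy x y C → T.Anc yh (ucx C))
    (hv : v ∈ T.Vx x) (hvD : v ∉ {w | ∃ C, IsCompOf G (T.Vx x) C ∧ T.Anc yh (ucx C) ∧ w ∈ C}) :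
    ReachableWithin G ({x, y}ᶜ) v T.root := by
  have hC := isCompOf_compOfVert (G := G) hv
  have hvC := mem_compOfVert_self (G := G) hv
  by_cases hyu : T.Anc y (ucx (CompOfVert G (T.Vx x) v))
  · refine PseudoSens.reachableWithin_root hxy hyx hC (hex _ hC) hey ?_ hvC
    by_contra hps
    exact hvD ⟨_, hC, hFS _ hC ⟨.inl hyu, hps⟩, hvC⟩
  · exact (hex _ hC).reachableWithin_root hxy hC hyu hvC

lemma reachableWithin_root_of_mem_Vy {xh r : V} (hxy : ¬ T.Anc x y) (hyx : ¬ T.Anc y x)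
    (hxh : T.IsChild xh x) (hyh : T.IsChild yh y)
    (hr : ∀ a : V, (a ∉ T.sub x ∧ ∃ b ∈ CompOfVert G (T.Vx x) xh, G.Adj a b) → T.Anc r a)
    (hyr : T.Anc yh r)
    (hex : ∀ C, IsCompOf G (T.Vx x) C → IsExitEdge T x C (ucx C) (vcx C))
    (hey : ∀ C, IsCompOf G (T.Vx y) C → IsExitEdge T y C (ucy C) (vcy C))
    (hFS : ∀ C, IsCompOf G (T.Vx y) C → FullySens T ucy vcy ucx vcx y x C → T.Anc xh (ucy C))
    (hv : v ∈ T.Vx y) (hvD : v ∉ CompOfVert G (T.Vx y) yh) :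
    ReachableWithin G ({x, y}ᶜ) v T.root := by
  rw [Set.pair_comm]
  have hC := isCompOf_compOfVert (G := G) hv
  have hvC := mem_compOfVert_self (G := G) hv
  by_cases hxu : T.Anc x (ucy (CompOfVert G (T.Vx y) v))
  · by_cases hps : PseudoSens T ucy vcy ucx vcx y x (CompOfVert G (T.Vx y) v)
    · exact hps.reachableWithin_root hyx hxy hC (hey _ hC) hex hvC
    · have hyhC := (hey _ hC).mem_of_anc_heavy hxy hyx hxh hyh hr hyr hC
        (hFS _ hC ⟨.inl hxu, hps⟩)
      exact absurd (hC.reachableWithin hyhC hvC) hvD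
  · exact (hey _ hC).reachableWithin_root hyx hC hxu hvC

end IndependentPair

theorem stmt13_general {V : Type*} (G : SimpleGraph V)
    (T : RSTree G) (hch : V → V)
    (uc vc : V → Set V → V) (hgood : GoodChoice G T uc vc)
    (x y : V) (hxy : HeavyPair T hch uc vc x y)
    (r0 : V)
    (hr1 : ∀ a : V,
      (a ∉ T.sub x ∧ ∃ b ∈ CompOfVert G (T.Vx x) (hch x), G.Adj a b) → T.Anc r0 a)
    (hy2 : T.Anc y r0) (hy3 : y ≠ r0)
    (hyh : T.Anc (hch y) (uc x (CompOfVert G (T.Vx x) (hch x)))) :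
    (G.induce (({x, y} : Set V)ᶜ)).Connected ↔
      ∃ a b : V, G.Adj a b ∧
        a ∈ ({w | ∃ C, IsCompOf G (T.Vx x) C ∧ T.Anc (hch y) (uc x C) ∧ w ∈ C}
              ∪ CompOfVert G (T.Vx y) (hch y) : Set V) ∧
        b ∉ ({w | ∃ C, IsCompOf G (T.Vx x) C ∧ T.Anc (hch y) (uc x C) ∧ w ∈ C}
              ∪ CompOfVert G (T.Vx y) (hch y) ∪ {x, y} : Set V) := by
  obtain ⟨hxr, hyr, hnxy, hnyx, hxc, hyc, hGx, hGy, hFSx, hFSy⟩ := hxy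
  have hex : ∀ C, IsCompOf G (T.Vx x) C → IsExitEdge T x C (uc x C) (vc x C) := hgood x hxr hGx
  have hey : ∀ C, IsCompOf G (T.Vx y) C → IsExitEdge T y C (uc y C) (vc y C) := hgood y hyr hGy
  have hHx := isCompOf_compOfVert (G := G) (hxc.mem_Vx (T.anc_refl _))
  have hr0 : T.Anc (hch y) r0 := hyc.anc_of_anc_of_anc hy2 hy3 hyh
    (hr1 _ ⟨(hex _ hHx).2.2, _, (hex _ hHx).2.1, (hex _ hHx).1⟩)
  refine induce_compl_connected_iff_exists_adj (d := hch y) (r := T.root)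
    (.inr (mem_compOfVert_self (hyc.mem_Vx (T.anc_refl _)))) ?_
    (fun v hv => reachableWithin_heavy_of_mem hnxy hnyx hyc hex hv) ?_
  · rintro ((⟨C, hC, -, hrC⟩ | hrH) | rfl | rfl)
    · exact hxr (anc_antisymm (hC.subset hrC).1 (T.reaches x))
    · exact hyr (anc_antisymm (compOfVert_subset hrH).1 (T.reaches y))
    exacts [hxr rfl, hyr rfl]
  · intro v hv
    simp only [Set.mem_union, not_or] at hv
    obtain ⟨⟨hvC, hvH⟩, hvxy⟩ := hv
    by_cases hxv : T.Anc x v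
    · exact reachableWithin_root_of_mem_Vx hnxy hnyx hex hey hFSx
        ⟨hxv, fun h => hvxy (.inl h)⟩ hvC
    by_cases hyv : T.Anc y v
    · exact reachableWithin_root_of_mem_Vy hnxy hnyx hxc hyc hr1 hr0 hex hey hFSy
        ⟨hyv, fun h => hvxy (.inr h)⟩ hvH
    exact reachableWithin_root_of_not_anc hxv hyv

/-- Let `x, y` be a heavy pair such that `y` lies on `π(s, u_{H_x})`
strictly above `r(x)` (i.e. `y` is a proper ancestor of `r(x)`) and the tree edge
`(y, y_h)` lies on `π_x(s, H_x)`. Define `Ĉ(x,y)` as the union of all components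
`C` of `G[V_x]` such that the tree edge `(y, y_h)` lies on `π_x(s,C)`. Then
`G \ {x,y}` is connected if and only if there is an edge of `G` from a vertex of
`Ĉ(x,y) ∪ H_y` to a vertex of `V \ (Ĉ(x,y) ∪ H_y ∪ {x,y})`. -/
theorem stmt13 {V : Type*} [Fintype V] (G : SimpleGraph V) (hG : G.Connected)
    (T : RSTree G) (hch : V → V) (hhch : HchValid T hch)
    (uc vc : V → Set V → V) (hgood : GoodChoice G T uc vc)
    (x y : V) (hxy : HeavyPair T hch uc vc x y)
    (r0 : V)
    (hr1 : ∀ a : V,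
      (a ∉ T.sub x ∧ ∃ b ∈ CompOfVert G (T.Vx x) (hch x), G.Adj a b) → T.Anc r0 a)
    (hr2 : ∀ w : V,
      (∀ a : V, (a ∉ T.sub x ∧ ∃ b ∈ CompOfVert G (T.Vx x) (hch x), G.Adj a b) →
        T.Anc w a) → T.Anc w r0)
    (hy1 : T.Anc y (uc x (CompOfVert G (T.Vx x) (hch x))))
    (hy2 : T.Anc y r0) (hy3 : y ≠ r0)
    (hyh : T.Anc (hch y) (uc x (CompOfVert G (T.Vx x) (hch x)))) :
    (G.induce (({x, y} : Set V)ᶜ)).Connected ↔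
      ∃ a b : V, G.Adj a b ∧
        a ∈ ({w | ∃ C, IsCompOf G (T.Vx x) C ∧ T.Anc (hch y) (uc x C) ∧ w ∈ C}
              ∪ CompOfVert G (T.Vx y) (hch y) : Set V) ∧
        b ∉ ({w | ∃ C, IsCompOf G (T.Vx x) C ∧ T.Anc (hch y) (uc x C) ∧ w ∈ C}
              ∪ CompOfVert G (T.Vx y) (hch y) ∪ {x, y} : Set V) :=
  stmt13_general G T hch uc vc hgood x y hxy r0 hr1 hy2 hy3 hyh
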